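/- Let x ≤ y and x' ≤ y' in \overline{[n]}. If either (x < x' and y < y'), or (\bar y ≥ x = \bar{y'} = x'), or (\bar y = x = \bar{y'} < x'), then H((x,y)⊗(x',y')) := max{ θ_j, θ'_j, η_j, η'_j evaluated at (x,y)⊗(x',y') : j ∈ {1,…,n} } equals 0. -/
import Mathlib


open Classical in
/-- `chi P` is 1 if `P` holds and 0 otherwise. -/
noncomputable def chi (P : Prop) : ℤ := if P then 1 else 0

/-- The involution `x ↦ 2n+1-x` on `{1,…,2n}` (the set `\overline{[n]}`). -/
def bar (n : ℕ) (x : ℤ) : ℤ := 2 * (n : ℤ) + 1 - x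

/-- `θ_j((x,y) ⊗ (x',y'))`. -/
noncomputable def thetaJ (n : ℕ) (j x y x' y' : ℤ) : ℤ :=
  chi (bar n j < x) + chi (bar n j < y) - chi (bar n j < x') - chi (bar n j < y')

/-- `θ'_j((x,y) ⊗ (x',y'))`. -/
noncomputable def thetaJ' (n : ℕ) (j x y x' y' : ℤ) : ℤ :=
  chi (x' < j) + chi (y' < j) - chi (x < j) - chi (y < j)

/-- `η_j((x,y) ⊗ (x',y'))`. -/
noncomputable def etaJ (n : ℕ) (j x y x' y' : ℤ) : ℤ :=
  chi (bar n j ≤ x) + chi (bar n j ≤ y) - chi (bar n j < x') - chi (bar n j < y')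
    - chi (x = j) - chi (y = j)

/-- `η'_j((x,y) ⊗ (x',y'))`. -/
noncomputable def etaJ' (n : ℕ) (j x y x' y' : ℤ) : ℤ :=
  chi (x' ≤ j) + chi (y' ≤ j) - chi (x < j) - chi (y < j)
    - chi (x' = bar n j) - chi (y' = bar n j)

/-- The Kang–Kashiwara–Misra energy
`H((x,y) ⊗ (x',y')) = max {θ_j, θ'_j, η_j, η'_j : j ∈ {1,…,n}}`. -/
noncomputable def Henergy (n : ℕ) (hn : 1 ≤ n) (x y x' y' : ℤ) : ℤ :=
  (Finset.Icc (1 : ℤ) (n : ℤ)).sup'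
    (Finset.nonempty_Icc.mpr (by exact_mod_cast hn))
    (fun j => max (max (thetaJ n j x y x' y') (thetaJ' n j x y x' y'))
                  (max (etaJ n j x y x' y') (etaJ' n j x y x' y')))

/-- The simple formula `H'((x,y) ⊗ (x',y'))`. -/
noncomputable def Hprime (n : ℕ) (x y x' y' : ℤ) : ℤ :=
  if bar n y' ≠ x then
    chi (x' ≤ x) + chi (y' ≤ y) - chi (y' ≤ y ∧ x < y' ∧ x' ≤ x)
  else
    chi (x' < x) + chi (y' < y) - chi (y' < y ∧ x < y' ∧ x' < x)


section Aux
variable (n : ℕ) (x y x' y' j : ℤ)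

open Classical in
lemma chi_eq (P : Prop) : chi P = if P then 1 else 0 := rfl

lemma theta_le (hn : 2 ≤ n)
    (hx : 1 ≤ x) (hxy : x ≤ y) (hy : y ≤ 2 * (n : ℤ))
    (hx' : 1 ≤ x') (hxy' : x' ≤ y') (hy' : y' ≤ 2 * (n : ℤ))
    (hcase : ((x < x' ∧ y < y') ∨ (x ≤ bar n y ∧ x = bar n y' ∧ bar n y' = x') ∨ (bar n y = x ∧ x = bar n y' ∧ bar n y' < x')))
    (hj1 : 1 ≤ j) (hjn : j ≤ (n : ℤ)) :
    thetaJ n j x y x' y' ≤ 0 := by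
  simp only [thetaJ, chi_eq, bar] at *
  split_ifs <;> omega

lemma theta'_le (hn : 2 ≤ n)
    (hx : 1 ≤ x) (hxy : x ≤ y) (hy : y ≤ 2 * (n : ℤ))
    (hx' : 1 ≤ x') (hxy' : x' ≤ y') (hy' : y' ≤ 2 * (n : ℤ))
    (hcase : ((x < x' ∧ y < y') ∨ (x ≤ bar n y ∧ x = bar n y' ∧ bar n y' = x') ∨ (bar n y = x ∧ x = bar n y' ∧ bar n y' < x')))
    (hj1 : 1 ≤ j) (hjn : j ≤ (n : ℤ)) :
    thetaJ' n j x y x' y' ≤ 0 := by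
  simp only [thetaJ', chi_eq, bar] at *
  split_ifs <;> omega

lemma eta_le (hn : 2 ≤ n)
    (hx : 1 ≤ x) (hxy : x ≤ y) (hy : y ≤ 2 * (n : ℤ))
    (hx' : 1 ≤ x') (hxy' : x' ≤ y') (hy' : y' ≤ 2 * (n : ℤ))
    (hcase : ((x < x' ∧ y < y') ∨ (x ≤ bar n y ∧ x = bar n y' ∧ bar n y' = x') ∨ (bar n y = x ∧ x = bar n y' ∧ bar n y' < x')))
    (hj1 : 1 ≤ j) (hjn : j ≤ (n : ℤ)) :
    etaJ n j x y x' y' ≤ 0 := by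
  simp only [etaJ, chi_eq, bar] at *
  split_ifs <;> omega

lemma eta'_le (hn : 2 ≤ n)
    (hx : 1 ≤ x) (hxy : x ≤ y) (hy : y ≤ 2 * (n : ℤ))
    (hx' : 1 ≤ x') (hxy' : x' ≤ y') (hy' : y' ≤ 2 * (n : ℤ))
    (hcase : ((x < x' ∧ y < y') ∨ (x ≤ bar n y ∧ x = bar n y' ∧ bar n y' = x') ∨ (bar n y = x ∧ x = bar n y' ∧ bar n y' < x')))
    (hj1 : 1 ≤ j) (hjn : j ≤ (n : ℤ)) :
    etaJ' n j x y x' y' ≤ 0 := by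
  simp only [etaJ', chi_eq, bar] at *
  split_ifs <;> omega

lemma theta'_one (hx : 1 ≤ x) (hxy : x ≤ y) (hx' : 1 ≤ x') (hxy' : x' ≤ y') :
    thetaJ' n 1 x y x' y' = 0 := by
  simp only [thetaJ', chi_eq]
  split_ifs <;> omega

end Aux

/-- in the three listed cases the KKM energy `H((x,y)⊗(x',y'))` is 0. -/
theorem stmt_3 (n : ℕ) (hn : 2 ≤ n) (x y x' y' : ℤ)
    (hx : 1 ≤ x) (hxy : x ≤ y) (hy : y ≤ 2 * (n : ℤ))
    (hx' : 1 ≤ x') (hxy' : x' ≤ y') (hy' : y' ≤ 2 * (n : ℤ))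
    (hcase : ((x < x' ∧ y < y') ∨ (x ≤ bar n y ∧ x = bar n y' ∧ bar n y' = x') ∨ (bar n y = x ∧ x = bar n y' ∧ bar n y' < x'))) :
    Henergy n (by omega) x y x' y' = 0 := by
  have hn1 : (1:ℤ) ∈ Finset.Icc (1:ℤ) (n:ℤ) := by
    simp only [Finset.mem_Icc]
    omega
  apply le_antisymm
  · apply Finset.sup'_le
    intro j hj
    simp only [Finset.mem_Icc] at hj
    simp only [max_le_iff]
    exact ⟨⟨theta_le n x y x' y' j hn hx hxy hy hx' hxy' hy' hcase hj.1 hj.2,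
            theta'_le n x y x' y' j hn hx hxy hy hx' hxy' hy' hcase hj.1 hj.2⟩,
           eta_le n x y x' y' j hn hx hxy hy hx' hxy' hy' hcase hj.1 hj.2,
           eta'_le n x y x' y' j hn hx hxy hy hx' hxy' hy' hcase hj.1 hj.2⟩
  · refine le_trans ?_ (Finset.le_sup' _ hn1)
    have := theta'_one n x y x' y' hx hxy hx' hxy'
    simp only [le_max_iff]
    omega
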